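/- Let F be a tree-graded space and let Δ = pqr be a geodesic triangle in F with sides p, q, r. Then the sides can be decomposed as p = p1 p2 p3, q = q1 q2 q3, r = r1 r2 r3 (some subpaths possibly trivial), such that the endpoints match up ((p1)+ = (r3)−, (p3)− = (q1)+, (q3)− = (r1)+) and the cycle p2 q2 r2 either is a single point or is contained in a single piece of F. -/

import Mathlib

/-- A map `γ` is a geodesic (unit-speed) on the interval `[a,b]`. -/
def IsGeodesicOn {F : Type*} [MetricSpace F] (γ : ℝ → F) (a b : ℝ) : Prop :=
  ∀ s ∈ Set.Icc a b, ∀ t ∈ Set.Icc a b, dist (γ s) (γ t) = |s - t|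

/-- A metric space is geodesic if every two points are joined by a geodesic. -/
def GeodesicSpace (F : Type*) [MetricSpace F] : Prop :=
  ∀ x y : F, ∃ γ : ℝ → F, γ 0 = x ∧ γ (dist x y) = y ∧ IsGeodesicOn γ 0 (dist x y)

/-- A subset is geodesic: any two of its points are joined by a geodesic inside it. -/
def GeodesicSubset {F : Type*} [MetricSpace F] (p : Set F) : Prop :=
  ∀ x ∈ p, ∀ y ∈ p, ∃ γ : ℝ → F, γ 0 = x ∧ γ (dist x y) = y ∧
    IsGeodesicOn γ 0 (dist x y) ∧ γ '' Set.Icc 0 (dist x y) ⊆ p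

/-- A nontrivial simple geodesic triangle: a simple loop `γ` on `[0,L]` composed of three
geodesics `[0,a]`, `[a,b]`, `[b,L]`. -/
structure SimpleGeodesicTriangle {F : Type*} [MetricSpace F]
    (γ : ℝ → F) (a b L : ℝ) : Prop where
  L_pos : 0 < L
  ha : 0 ≤ a
  hab : a ≤ b
  hbL : b ≤ L
  side1 : IsGeodesicOn γ 0 a
  side2 : IsGeodesicOn γ a b
  side3 : IsGeodesicOn γ b L
  closed : γ 0 = γ L
  simple : Set.InjOn γ (Set.Ico 0 L)

/-- `F` is tree-graded with respect to the collection `P` of pieces. -/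
structure IsTreeGraded {F : Type*} [MetricSpace F] (P : Set (Set F)) : Prop where
  pieces_nonempty : ∀ p ∈ P, p.Nonempty
  pieces_closed : ∀ p ∈ P, IsClosed p
  pieces_geodesic : ∀ p ∈ P, GeodesicSubset p
  T1 : ∀ p ∈ P, ∀ q ∈ P, p ≠ q → (p ∩ q).Subsingleton
  T2 : ∀ (γ : ℝ → F) (a b L : ℝ), SimpleGeodesicTriangle γ a b L →
    ∃ p ∈ P, γ '' Set.Icc 0 L ⊆ p

/-!
Among all subtriangles, i.e. choices of subarcs `[a₁, a₂]`, `[b₁, b₂]`, `[c₁, c₂]` of the three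
sides whose consecutive endpoints coincide, pick one of least perimeter; it exists by compactness.
By minimality any two of its sides meet only at their common endpoint, so unless it is a point
its three sides concatenate to a simple geodesic loop, which by the axiom on triangles lies in a
piece.
-/

open Set

section

variable {F : Type*} [MetricSpace F]

namespace IsGeodesicOn

variable {γ : ℝ → F} {a b : ℝ}

theorem isometry_restrict (h : IsGeodesicOn γ a b) : Isometry ((Icc a b).domRestrict γ) :=
  Isometry.of_dist_eq fun s t => h s s.2 t t.2

theorem injOn (h : IsGeodesicOn γ a b) : InjOn γ (Icc a b) :=
  injOn_iff_injective.2 h.isometry_restrict.injective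

theorem exists_continuous_eqOn (h : IsGeodesicOn γ a b) (hab : a ≤ b) :
    ∃ γ' : ℝ → F, Continuous γ' ∧ EqOn γ' γ (Icc a b) :=
  ⟨IccExtend hab ((Icc a b).domRestrict γ), h.isometry_restrict.continuous.Icc_extend',
    fun _ hx => IccExtend_of_mem hab _ hx⟩

theorem comp_const_add (h : IsGeodesicOn γ a b) {c d : ℝ} (hc : a ≤ c) (hd : d ≤ b) :
    IsGeodesicOn (fun s => γ (c + s)) 0 (d - c) := by
  intro s hs t ht
  rw [h (c + s) ⟨by linarith [hs.1], by linarith [hs.2]⟩ (c + t)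
    ⟨by linarith [ht.1], by linarith [ht.2]⟩, add_sub_add_left_eq_sub]

theorem of_eq_sub_const {δ : ℝ → F} (hδ : IsGeodesicOn δ 0 b)
    (he : ∀ u ∈ Icc a (a + b), γ u = δ (u - a)) : IsGeodesicOn γ a (a + b) := by
  intro s hs t ht
  rw [he s hs, he t ht, hδ (s - a) ⟨by linarith [hs.1], by linarith [hs.2]⟩ (t - a)
    ⟨by linarith [ht.1], by linarith [ht.2]⟩, sub_sub_sub_cancel_right]

end IsGeodesicOn

theorem image_comp_const_add_Icc {α : Type*} (γ : ℝ → α) (c d : ℝ) :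
    (fun s => γ (c + s)) '' Icc 0 (d - c) = γ '' Icc c d := by
  rw [show (fun s => γ (c + s)) = γ ∘ (c + ·) from rfl, image_comp, image_const_add_Icc]
  simp

structure IsGeodesicTriangle (p q r : ℝ → F) (A B C : ℝ) : Prop where
  nonneg_A : 0 ≤ A
  nonneg_B : 0 ≤ B
  nonneg_C : 0 ≤ C
  geodesic_p : IsGeodesicOn p 0 A
  geodesic_q : IsGeodesicOn q 0 B
  geodesic_r : IsGeodesicOn r 0 C
  pq : p A = q 0
  qr : q B = r 0
  rp : r C = p 0

def MeetsOnlyAtJunction {α : Type*} (p q : ℝ → α) (A B : ℝ) : Prop :=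
  ∀ s ∈ Icc 0 A, ∀ t ∈ Icc 0 B, p s = q t → s = A ∧ t = 0

noncomputable def triangleLoop {α : Type*} (p q r : ℝ → α) (A B u : ℝ) : α :=
  if u ≤ A then p u else if u ≤ A + B then q (u - A) else r (u - (A + B))

namespace IsGeodesicTriangle

variable {p q r : ℝ → F} {A B C : ℝ} (h : IsGeodesicTriangle p q r A B C)
include h

theorem triangleLoop_eq_of_mem_Icc {u : ℝ} (hu : u ∈ Icc A (A + B)) :
    triangleLoop p q r A B u = q (u - A) := by
  unfold triangleLoop
  split_ifs with h₁ h₂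
  · rw [le_antisymm h₁ hu.1, sub_self, h.pq]
  · rfl
  · exact absurd hu.2 h₂

theorem triangleLoop_eq_of_le {u : ℝ} (hu : A + B ≤ u) :
    triangleLoop p q r A B u = r (u - (A + B)) := by
  have hB := h.nonneg_B
  unfold triangleLoop
  split_ifs with h₁ h₂
  · rw [show u = A by linarith, show B = 0 by linarith, h.pq, add_zero, sub_self, ← h.qr,
      show B = 0 by linarith]
  · rw [le_antisymm h₂ hu, add_sub_cancel_left, sub_self, h.qr]
  · rfl

theorem injOn_triangleLoop (hpq : MeetsOnlyAtJunction p q A B)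
    (hqr : MeetsOnlyAtJunction q r B C) (hrp : MeetsOnlyAtJunction r p C A) :
    InjOn (triangleLoop p q r A B) (Ico 0 (A + B + C)) := by
  intro s hs t ht hst
  wlog hle : s ≤ t generalizing s t
  · exact (this ht hs hst.symm (le_of_not_ge hle)).symm
  unfold triangleLoop at hst
  split_ifs at hst
  · exact h.geodesic_p.injOn ⟨hs.1, ‹s ≤ A›⟩ ⟨ht.1, ‹t ≤ A›⟩ hst
  · have := hpq s ⟨hs.1, ‹s ≤ A›⟩ (t - A) ⟨by linarith, by linarith⟩ hst
    linarith
  · have := hrp (t - (A + B)) ⟨by linarith, by linarith [ht.2]⟩ s ⟨hs.1, ‹s ≤ A›⟩ hst.symm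
    linarith [ht.2]
  · linarith
  · exact sub_left_injective (h.geodesic_q.injOn ⟨by linarith, by linarith⟩
      ⟨by linarith, by linarith⟩ hst)
  · have := hqr (s - A) ⟨by linarith, by linarith⟩ (t - (A + B)) ⟨by linarith, by linarith [ht.2]⟩
      hst
    linarith
  · linarith
  · linarith
  · exact sub_left_injective (h.geodesic_r.injOn ⟨by linarith, by linarith [hs.2]⟩
      ⟨by linarith, by linarith [ht.2]⟩ hst)

theorem simpleGeodesicTriangle_triangleLoop (hpq : MeetsOnlyAtJunction p q A B)
    (hqr : MeetsOnlyAtJunction q r B C) (hrp : MeetsOnlyAtJunction r p C A)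
    (hpos : 0 < A + B + C) :
    SimpleGeodesicTriangle (triangleLoop p q r A B) A (A + B) (A + B + C) where
  L_pos := hpos
  ha := h.nonneg_A
  hab := le_add_of_nonneg_right h.nonneg_B
  hbL := le_add_of_nonneg_right h.nonneg_C
  side1 s hs t ht := by
    rw [triangleLoop, if_pos hs.2, triangleLoop, if_pos ht.2]
    exact h.geodesic_p s hs t ht
  side2 := h.geodesic_q.of_eq_sub_const fun _ hu => h.triangleLoop_eq_of_mem_Icc hu
  side3 := h.geodesic_r.of_eq_sub_const fun _ hu => h.triangleLoop_eq_of_le hu.1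
  closed := by
    rw [triangleLoop, if_pos h.nonneg_A,
      h.triangleLoop_eq_of_le (le_add_of_nonneg_right h.nonneg_C), add_sub_cancel_left, h.rp]
  simple := h.injOn_triangleLoop hpq hqr hrp

theorem image_subset_triangleLoop :
    p '' Icc 0 A ∪ q '' Icc 0 B ∪ r '' Icc 0 C ⊆
      triangleLoop p q r A B '' Icc 0 (A + B + C) := by
  have hA := h.nonneg_A
  have hB := h.nonneg_B
  have hC := h.nonneg_C
  rintro x ((⟨u, hu, rfl⟩ | ⟨u, hu, rfl⟩) | ⟨u, hu, rfl⟩)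
  · exact ⟨u, ⟨hu.1, by linarith [hu.2]⟩, if_pos hu.2⟩
  · refine ⟨A + u, ⟨by linarith [hu.1], by linarith [hu.2]⟩, ?_⟩
    rw [h.triangleLoop_eq_of_mem_Icc ⟨by linarith [hu.1], by linarith [hu.2]⟩,
      add_sub_cancel_left]
  · refine ⟨A + B + u, ⟨by linarith [hu.1], by linarith [hu.2]⟩, ?_⟩
    rw [h.triangleLoop_eq_of_le (by linarith [hu.1]), add_sub_cancel_left]

end IsGeodesicTriangle

theorem IsTreeGraded.exists_piece_of_meetsOnlyAtJunction {P : Set (Set F)} (hP : IsTreeGraded P)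
    {p q r : ℝ → F} {A B C : ℝ} (h : IsGeodesicTriangle p q r A B C)
    (hpq : MeetsOnlyAtJunction p q A B) (hqr : MeetsOnlyAtJunction q r B C)
    (hrp : MeetsOnlyAtJunction r p C A) (hpos : 0 < A + B + C) :
    ∃ pc ∈ P, p '' Icc 0 A ∪ q '' Icc 0 B ∪ r '' Icc 0 C ⊆ pc := by
  obtain ⟨pc, hpc, hsub⟩ :=
    hP.T2 _ _ _ _ (h.simpleGeodesicTriangle_triangleLoop hpq hqr hrp hpos)
  exact ⟨pc, hpc, h.image_subset_triangleLoop.trans hsub⟩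

def IsSubtriangle {α : Type*} (p q r : ℝ → α) (Lp Lq Lr a₁ a₂ b₁ b₂ c₁ c₂ : ℝ) : Prop :=
  0 ≤ a₁ ∧ a₁ ≤ a₂ ∧ a₂ ≤ Lp ∧ 0 ≤ b₁ ∧ b₁ ≤ b₂ ∧ b₂ ≤ Lq ∧ 0 ≤ c₁ ∧ c₁ ≤ c₂ ∧ c₂ ≤ Lr ∧
    p a₂ = q b₁ ∧ q b₂ = r c₁ ∧ r c₂ = p a₁

def IsMinimalSubtriangle {α : Type*} (p q r : ℝ → α) (Lp Lq Lr a₁ a₂ b₁ b₂ c₁ c₂ : ℝ) : Prop :=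
  IsSubtriangle p q r Lp Lq Lr a₁ a₂ b₁ b₂ c₁ c₂ ∧
    ∀ a₁' a₂' b₁' b₂' c₁' c₂', IsSubtriangle p q r Lp Lq Lr a₁' a₂' b₁' b₂' c₁' c₂' →
      a₂ - a₁ + (b₂ - b₁) + (c₂ - c₁) ≤ a₂' - a₁' + (b₂' - b₁') + (c₂' - c₁')

section Subtriangle

variable {α : Type*} {p q r p' q' r' : ℝ → α} {Lp Lq Lr a₁ a₂ b₁ b₂ c₁ c₂ : ℝ}

theorem IsSubtriangle.rotate (h : IsSubtriangle p q r Lp Lq Lr a₁ a₂ b₁ b₂ c₁ c₂) :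
    IsSubtriangle q r p Lq Lr Lp b₁ b₂ c₁ c₂ a₁ a₂ := by
  obtain ⟨ha₁, ha₁₂, ha₂, hb₁, hb₁₂, hb₂, hc₁, hc₁₂, hc₂, hpq, hqr, hrp⟩ := h
  exact ⟨hb₁, hb₁₂, hb₂, hc₁, hc₁₂, hc₂, ha₁, ha₁₂, ha₂, hqr, hrp, hpq⟩

theorem IsSubtriangle.congr (h : IsSubtriangle p q r Lp Lq Lr a₁ a₂ b₁ b₂ c₁ c₂)
    (hp : EqOn p p' (Icc 0 Lp)) (hq : EqOn q q' (Icc 0 Lq)) (hr : EqOn r r' (Icc 0 Lr)) :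
    IsSubtriangle p' q' r' Lp Lq Lr a₁ a₂ b₁ b₂ c₁ c₂ := by
  obtain ⟨ha₁, ha₁₂, ha₂, hb₁, hb₁₂, hb₂, hc₁, hc₁₂, hc₂, hpq, hqr, hrp⟩ := h
  refine ⟨ha₁, ha₁₂, ha₂, hb₁, hb₁₂, hb₂, hc₁, hc₁₂, hc₂, ?_, ?_, ?_⟩
  · rw [← hp ⟨ha₁.trans ha₁₂, ha₂⟩, ← hq ⟨hb₁, hb₁₂.trans hb₂⟩, hpq]
  · rw [← hq ⟨hb₁.trans hb₁₂, hb₂⟩, ← hr ⟨hc₁, hc₁₂.trans hc₂⟩, hqr]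
  · rw [← hr ⟨hc₁.trans hc₁₂, hc₂⟩, ← hp ⟨ha₁, ha₁₂.trans ha₂⟩, hrp]

theorem IsMinimalSubtriangle.rotate (h : IsMinimalSubtriangle p q r Lp Lq Lr a₁ a₂ b₁ b₂ c₁ c₂) :
    IsMinimalSubtriangle q r p Lq Lr Lp b₁ b₂ c₁ c₂ a₁ a₂ := by
  refine ⟨h.1.rotate, fun b₁' b₂' c₁' c₂' a₁' a₂' h' => ?_⟩
  linarith [h.2 a₁' a₂' b₁' b₂' c₁' c₂' h'.rotate.rotate]

/-- Shortening the sides `p` and `q` to a common point would decrease the perimeter. -/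
theorem IsMinimalSubtriangle.meetsOnlyAtJunction
    (h : IsMinimalSubtriangle p q r Lp Lq Lr a₁ a₂ b₁ b₂ c₁ c₂) :
    MeetsOnlyAtJunction (fun s => p (a₁ + s)) (fun t => q (b₁ + t)) (a₂ - a₁) (b₂ - b₁) := by
  obtain ⟨⟨ha₁, -, ha₂, hb₁, -, hb₂, hc₁, hc₁₂, hc₂, -, hqr, hrp⟩, hmin⟩ := h
  intro s hs t ht hst
  have hsub : IsSubtriangle p q r Lp Lq Lr a₁ (a₁ + s) (b₁ + t) b₂ c₁ c₂ :=
    ⟨ha₁, by linarith [hs.1], by linarith [hs.2], by linarith [ht.1], by linarith [ht.2], hb₂,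
      hc₁, hc₁₂, hc₂, hst, hqr, hrp⟩
  have := hmin _ _ _ _ _ _ hsub
  constructor <;> linarith [hs.2, ht.1]

end Subtriangle

namespace IsGeodesicTriangle

variable {p q r : ℝ → F} {Lp Lq Lr : ℝ} (h : IsGeodesicTriangle p q r Lp Lq Lr)
include h

theorem isSubtriangle : IsSubtriangle p q r Lp Lq Lr 0 Lp 0 Lq 0 Lr :=
  ⟨le_rfl, h.nonneg_A, le_rfl, le_rfl, h.nonneg_B, le_rfl, le_rfl, h.nonneg_C, le_rfl, h.pq, h.qr,
    h.rp⟩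

theorem isGeodesicTriangle_of_isSubtriangle {a₁ a₂ b₁ b₂ c₁ c₂ : ℝ}
    (hs : IsSubtriangle p q r Lp Lq Lr a₁ a₂ b₁ b₂ c₁ c₂) :
    IsGeodesicTriangle (fun s => p (a₁ + s)) (fun s => q (b₁ + s)) (fun s => r (c₁ + s))
      (a₂ - a₁) (b₂ - b₁) (c₂ - c₁) := by
  obtain ⟨ha₁, ha₁₂, ha₂, hb₁, hb₁₂, hb₂, hc₁, hc₁₂, hc₂, hpq, hqr, hrp⟩ := hs
  refine ⟨sub_nonneg.2 ha₁₂, sub_nonneg.2 hb₁₂, sub_nonneg.2 hc₁₂,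
    h.geodesic_p.comp_const_add ha₁ ha₂, h.geodesic_q.comp_const_add hb₁ hb₂,
    h.geodesic_r.comp_const_add hc₁ hc₂, ?_, ?_, ?_⟩ <;> simpa

theorem exists_isMinimalSubtriangle :
    ∃ a₁ a₂ b₁ b₂ c₁ c₂, IsMinimalSubtriangle p q r Lp Lq Lr a₁ a₂ b₁ b₂ c₁ c₂ := by
  obtain ⟨p', hp', hpp'⟩ := h.geodesic_p.exists_continuous_eqOn h.nonneg_A
  obtain ⟨q', hq', hqq'⟩ := h.geodesic_q.exists_continuous_eqOn h.nonneg_B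
  obtain ⟨r', hr', hrr'⟩ := h.geodesic_r.exists_continuous_eqOn h.nonneg_C
  have hiff (x : Fin 6 → ℝ) :
      IsSubtriangle p' q' r' Lp Lq Lr (x 0) (x 1) (x 2) (x 3) (x 4) (x 5) ↔
        IsSubtriangle p q r Lp Lq Lr (x 0) (x 1) (x 2) (x 3) (x 4) (x 5) :=
    ⟨fun hx => hx.congr hpp' hqq' hrr', fun hx => hx.congr hpp'.symm hqq'.symm hrr'.symm⟩
  -- The sides are only continuous on their intervals; continuous extensions make the set of
  -- subtriangles closed.
  set S := {x : Fin 6 → ℝ | IsSubtriangle p' q' r' Lp Lq Lr (x 0) (x 1) (x 2) (x 3) (x 4) (x 5)}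
  have hclosed : IsClosed S := by
    simp only [S, IsSubtriangle, ofPred_and]
    repeat' apply IsClosed.inter
    all_goals first
      | exact isClosed_le (by fun_prop) (by fun_prop)
      | exact isClosed_eq (by fun_prop) (by fun_prop)
  have hbdd : S ⊆ Icc 0 fun _ => max Lp (max Lq Lr) := by
    rintro x ⟨ha₁, ha₁₂, ha₂, hb₁, hb₁₂, hb₂, hc₁, hc₁₂, hc₂, -⟩
    constructor <;> intro i <;> fin_cases i <;> simp <;> grind
  have hS : ![0, Lp, 0, Lq, 0, Lr] ∈ S := (hiff _).2 h.isSubtriangle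
  obtain ⟨x, hx, hmin⟩ := (Metric.isCompact_of_isClosed_isBounded hclosed
    ((Metric.isBounded_Icc _ _).subset hbdd)).exists_isMinOn ⟨_, hS⟩
      (f := fun x => x 1 - x 0 + (x 3 - x 2) + (x 5 - x 4)) (by fun_prop)
  exact ⟨x 0, x 1, x 2, x 3, x 4, x 5, (hiff x).1 hx, fun a₁ a₂ b₁ b₂ c₁ c₂ hs =>
    hmin (show ![a₁, a₂, b₁, b₂, c₁, c₂] ∈ S from (hiff _).2 hs)⟩

end IsGeodesicTriangle

end

theorem stmt_2_general {F : Type*} [MetricSpace F]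
    (P : Set (Set F)) (hTG : IsTreeGraded P)
    (p q r : ℝ → F) (Lp Lq Lr : ℝ) (hLp : 0 ≤ Lp) (hLq : 0 ≤ Lq) (hLr : 0 ≤ Lr)
    (hp : IsGeodesicOn p 0 Lp) (hq : IsGeodesicOn q 0 Lq) (hr : IsGeodesicOn r 0 Lr)
    (hpq : p Lp = q 0) (hqr : q Lq = r 0) (hrp : r Lr = p 0) :
    ∃ a₁ a₂ b₁ b₂ c₁ c₂ : ℝ,
      0 ≤ a₁ ∧ a₁ ≤ a₂ ∧ a₂ ≤ Lp ∧
      0 ≤ b₁ ∧ b₁ ≤ b₂ ∧ b₂ ≤ Lq ∧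
      0 ≤ c₁ ∧ c₁ ≤ c₂ ∧ c₂ ≤ Lr ∧
      p a₂ = q b₁ ∧ q b₂ = r c₁ ∧ r c₂ = p a₁ ∧
      ((a₁ = a₂ ∧ b₁ = b₂ ∧ c₁ = c₂) ∨
        ∃ pc ∈ P, p '' Set.Icc a₁ a₂ ∪ q '' Set.Icc b₁ b₂ ∪ r '' Set.Icc c₁ c₂ ⊆ pc) := by
  have hT : IsGeodesicTriangle p q r Lp Lq Lr := ⟨hLp, hLq, hLr, hp, hq, hr, hpq, hqr, hrp⟩
  obtain ⟨a₁, a₂, b₁, b₂, c₁, c₂, hmin⟩ := hT.exists_isMinimalSubtriangle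
  obtain ⟨ha₁, ha₁₂, ha₂, hb₁, hb₁₂, hb₂, hc₁, hc₁₂, hc₂, e₁, e₂, e₃⟩ := hmin.1
  refine ⟨a₁, a₂, b₁, b₂, c₁, c₂, ha₁, ha₁₂, ha₂, hb₁, hb₁₂, hb₂, hc₁, hc₁₂, hc₂, e₁, e₂, e₃,
    or_iff_not_imp_left.2 fun hdeg => ?_⟩
  have hpos : 0 < a₂ - a₁ + (b₂ - b₁) + (c₂ - c₁) := by
    contrapose! hdeg
    refine ⟨?_, ?_, ?_⟩ <;> linarith
  obtain ⟨pc, hpc, hsub⟩ := hTG.exists_piece_of_meetsOnlyAtJunction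
    (hT.isGeodesicTriangle_of_isSubtriangle hmin.1) hmin.meetsOnlyAtJunction
    hmin.rotate.meetsOnlyAtJunction hmin.rotate.rotate.meetsOnlyAtJunction hpos
  simp only [image_comp_const_add_Icc] at hsub
  exact ⟨pc, hpc, hsub⟩

/-- decomposition of geodesic triangles in tree-graded spaces.  The sides
`p, q, r` of a geodesic triangle decompose as `p = p₁p₂p₃`, `q = q₁q₂q₃`, `r = r₁r₂r₃`
with matching endpoints, and the middle cycle `p₂q₂r₂` is either a single point or is
contained in a single piece. -/
theorem stmt_2 {F : Type*} [MetricSpace F] [CompleteSpace F] (hF : GeodesicSpace F)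
    (P : Set (Set F)) (hTG : IsTreeGraded P)
    (p q r : ℝ → F) (Lp Lq Lr : ℝ) (hLp : 0 ≤ Lp) (hLq : 0 ≤ Lq) (hLr : 0 ≤ Lr)
    (hp : IsGeodesicOn p 0 Lp) (hq : IsGeodesicOn q 0 Lq) (hr : IsGeodesicOn r 0 Lr)
    (hpq : p Lp = q 0) (hqr : q Lq = r 0) (hrp : r Lr = p 0) :
    ∃ a₁ a₂ b₁ b₂ c₁ c₂ : ℝ,
      0 ≤ a₁ ∧ a₁ ≤ a₂ ∧ a₂ ≤ Lp ∧
      0 ≤ b₁ ∧ b₁ ≤ b₂ ∧ b₂ ≤ Lq ∧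
      0 ≤ c₁ ∧ c₁ ≤ c₂ ∧ c₂ ≤ Lr ∧
      p a₂ = q b₁ ∧ q b₂ = r c₁ ∧ r c₂ = p a₁ ∧
      ((a₁ = a₂ ∧ b₁ = b₂ ∧ c₁ = c₂) ∨
        ∃ pc ∈ P, p '' Set.Icc a₁ a₂ ∪ q '' Set.Icc b₁ b₂ ∪ r '' Set.Icc c₁ c₂ ⊆ pc) :=
  stmt_2_general P hTG p q r Lp Lq Lr hLp hLq hLr hp hq hr hpq hqr hrp
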